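/- arXiv:1802.08623 — 5 statements merged into one kernel-verified Lean document; each statement's English description precedes it below -/
import Mathlib

section
/- For every Hurst parameter H with 0 < H < 1, the function (r,s) ↦ e^{-r} e^{-s} (r^{2H} + s^{2H} - |r-s|^{2H})/2 is integrable on (0,∞) × (0,∞), and its integral C_H = ∫_0^∞ ∫_0^∞ e^{-r} e^{-s} (r^{2H} + s^{2H} - |r-s|^{2H})/2 dr ds is a strictly positive real number. -/
/-!
On the open quadrant the bracket `r^(2H) + s^(2H) - |r - s|^(2H)` is positive, because
`|r - s| < max r s` and `t ↦ t^(2H)` is strictly increasing; so the integrand is positive there.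
Dropping the subtracted term bounds it by `e^{-r} r^(2H) e^{-s} + e^{-r} e^{-s} s^(2H)`, a sum of
products of Gamma-type integrands, which gives integrability. A positive integrable function on a
set of positive measure has positive integral.
-/

open MeasureTheory Set Real

theorem Real.abs_sub_rpow_lt_rpow_add_rpow {a b p : ℝ} (ha : 0 < a) (hb : 0 < b) (hp : 0 < p) :
    |a - b| ^ p < a ^ p + b ^ p := by
  rcases le_total b a with hba | hab
  · have : |a - b| ^ p < a ^ p :=
      rpow_lt_rpow (abs_nonneg _) (by rw [abs_of_nonneg (sub_nonneg.2 hba)]; linarith) hp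
    linarith [rpow_pos_of_pos hb p]
  · have : |a - b| ^ p < b ^ p :=
      rpow_lt_rpow (abs_nonneg _)
        (by rw [abs_sub_comm, abs_of_nonneg (sub_nonneg.2 hab)]; linarith) hp
    linarith [rpow_pos_of_pos ha p]

theorem integrableOn_exp_neg_mul_rpow {s : ℝ} (hs : -1 < s) :
    IntegrableOn (fun x : ℝ => exp (-x) * x ^ s) (Ioi 0) := by
  simpa using GammaIntegral_convergent (s := s + 1) (by linarith)

theorem MeasureTheory.IntegrableOn.mul_prod {α β : Type*} [MeasurableSpace α]
    [MeasurableSpace β] {μ : Measure α} {ν : Measure β} [SFinite μ] [SFinite ν]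
    {f : α → ℝ} {g : β → ℝ} {s : Set α} {t : Set β} (hf : IntegrableOn f s μ)
    (hg : IntegrableOn g t ν) :
    IntegrableOn (fun p : α × β => f p.1 * g p.2) (s ×ˢ t) (μ.prod ν) := by
  rw [IntegrableOn, ← Measure.prod_restrict]
  exact Integrable.mul_prod hf hg

theorem MeasureTheory.setIntegral_pos_of_pos {α : Type*} [MeasurableSpace α] {μ : Measure α}
    {f : α → ℝ} {s : Set α} (hs : MeasurableSet s) (hμs : μ s ≠ 0)
    (hf : IntegrableOn f s μ) (hpos : ∀ x ∈ s, 0 < f x) : 0 < ∫ x in s, f x ∂μ := by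
  have hnonneg : 0 ≤ᵐ[μ.restrict s] f :=
    (ae_restrict_iff' hs).2 (Filter.Eventually.of_forall fun x hx => (hpos x hx).le)
  have hsupport : Function.support f ∩ s = s :=
    inter_eq_right.2 fun x hx => (hpos x hx).ne'
  rw [setIntegral_pos_iff_support_of_nonneg_ae hnonneg hf, hsupport]
  exact pos_iff_ne_zero.2 hμs

/-- The integrand of `C_H`, with `q = 2H`. -/
noncomputable def fbmIntegrand (q : ℝ) (p : ℝ × ℝ) : ℝ :=
  exp (-p.1) * exp (-p.2) * (p.1 ^ q + p.2 ^ q - |p.1 - p.2| ^ q) / 2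

theorem fbmIntegrand_pos {q : ℝ} (hq : 0 < q) {p : ℝ × ℝ}
    (hp : p ∈ Ioi (0 : ℝ) ×ˢ Ioi (0 : ℝ)) :
    0 < fbmIntegrand q p := by
  have := abs_sub_rpow_lt_rpow_add_rpow hp.1 hp.2 hq
  have : 0 < p.1 ^ q + p.2 ^ q - |p.1 - p.2| ^ q := by linarith
  unfold fbmIntegrand
  positivity

theorem fbmIntegrand_le {q : ℝ} {p : ℝ × ℝ} (hp : p ∈ Ici (0 : ℝ) ×ˢ Ici (0 : ℝ)) :
    fbmIntegrand q p ≤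
      exp (-p.1) * p.1 ^ q * exp (-p.2) + exp (-p.1) * (exp (-p.2) * p.2 ^ q) := by
  have : 0 ≤ p.1 ^ q := rpow_nonneg hp.1 q
  have : 0 ≤ p.2 ^ q := rpow_nonneg hp.2 q
  have : 0 ≤ |p.1 - p.2| ^ q := rpow_nonneg (abs_nonneg _) q
  have : 0 < exp (-p.1) * exp (-p.2) := by positivity
  unfold fbmIntegrand
  nlinarith

theorem integrableOn_fbmIntegrand {q : ℝ} (hq : 0 < q) :
    IntegrableOn (fbmIntegrand q) (Ioi 0 ×ˢ Ioi 0) := by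
  have hpow := integrableOn_exp_neg_mul_rpow (s := q) (by linarith)
  have hexp : IntegrableOn (fun x : ℝ => exp (-x)) (Ioi 0) := by
    simpa using integrableOn_exp_neg_mul_rpow (s := 0) (by norm_num)
  have hdom : IntegrableOn (fun p : ℝ × ℝ => exp (-p.1) * p.1 ^ q * exp (-p.2) +
      exp (-p.1) * (exp (-p.2) * p.2 ^ q)) (Ioi 0 ×ˢ Ioi 0) := by
    rw [Measure.volume_eq_prod]
    exact (hpow.mul_prod hexp).add (hexp.mul_prod hpow)
  refine hdom.mono' (by unfold fbmIntegrand; fun_prop) ((ae_restrict_iff' ?_).2 ?_)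
  · exact measurableSet_Ioi.prod measurableSet_Ioi
  · refine Filter.Eventually.of_forall fun p hp => ?_
    rw [norm_of_nonneg (fbmIntegrand_pos hq hp).le]
    exact fbmIntegrand_le (prod_mono Ioi_subset_Ici_self Ioi_subset_Ici_self hp)

theorem statement_0_general (H : ℝ) (hH0 : 0 < H) :
    IntegrableOn
      (fun p : ℝ × ℝ =>
        Real.exp (-p.1) * Real.exp (-p.2) *
          (p.1 ^ (2 * H) + p.2 ^ (2 * H) - |p.1 - p.2| ^ (2 * H)) / 2)
      (Set.Ioi (0 : ℝ) ×ˢ Set.Ioi (0 : ℝ)) volume ∧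
    0 < ∫ p in Set.Ioi (0 : ℝ) ×ˢ Set.Ioi (0 : ℝ),
          Real.exp (-p.1) * Real.exp (-p.2) *
            (p.1 ^ (2 * H) + p.2 ^ (2 * H) - |p.1 - p.2| ^ (2 * H)) / 2 := by
  have hq : 0 < 2 * H := by positivity
  have hint := integrableOn_fbmIntegrand hq
  have hvol : volume (Ioi (0 : ℝ) ×ˢ Ioi (0 : ℝ)) ≠ 0 :=
    ((isOpen_Ioi.prod isOpen_Ioi).measure_pos volume ⟨(1, 1), one_pos, one_pos⟩).ne'
  exact ⟨hint, setIntegral_pos_of_pos (measurableSet_Ioi.prod measurableSet_Ioi) hvol hint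
    fun _ hp => fbmIntegrand_pos hq hp⟩

theorem statement_0 (H : ℝ) (hH0 : 0 < H) (hH1 : H < 1) :
    IntegrableOn
      (fun p : ℝ × ℝ =>
        Real.exp (-p.1) * Real.exp (-p.2) *
          (p.1 ^ (2 * H) + p.2 ^ (2 * H) - |p.1 - p.2| ^ (2 * H)) / 2)
      (Set.Ioi (0 : ℝ) ×ˢ Set.Ioi (0 : ℝ)) volume ∧
    0 < ∫ p in Set.Ioi (0 : ℝ) ×ˢ Set.Ioi (0 : ℝ),
          Real.exp (-p.1) * Real.exp (-p.2) *
            (p.1 ^ (2 * H) + p.2 ^ (2 * H) - |p.1 - p.2| ^ (2 * H)) / 2 :=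
  statement_0_general H hH0
end

section
/- Let H > 1/4 be a real number. For every k ∈ ℤ²₀, the function h ↦ 1/(|h|^{4H} |k-h|^{4H}) is summable over h ∈ ℤ² \ {0, k}; that is, the series ∑_{h ∈ ℤ²₀, h ≠ k} 1/(|h|^{4H} |k-h|^{4H}) converges. -/
/-!
Both factors are square-summable over `ℤ²`: `|h|^(-8H)` is summable because `8H > 2`, and its
translate `|k - h|^(-8H)` is a reindexing of the same family. Cauchy–Schwarz (Hölder with
exponents `2, 2`) then makes their product summable. Since `0 ^ (-s) = 0` for real powers, the
excluded points `h = 0, k` need no special treatment when summing over all of `ℤ²`.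
-/

/-- Euclidean norm of an element of `ℤ²`. -/
noncomputable def znorm (k : ℤ × ℤ) : ℝ :=
  Real.sqrt ((k.1 : ℝ) ^ 2 + (k.2 : ℝ) ^ 2)

open Real

lemma znorm_nonneg (h : ℤ × ℤ) : 0 ≤ znorm h := sqrt_nonneg _

lemma norm_finTwoArrowEquiv_symm_le_znorm (h : ℤ × ℤ) :
    ‖(finTwoArrowEquiv ℤ).symm h‖ ≤ znorm h := by
  refine (pi_norm_le_iff_of_nonneg (sqrt_nonneg _)).2 (Fin.forall_fin_two.2 ⟨?_, ?_⟩) <;>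
    simp only [finTwoArrowEquiv_symm_apply, Matrix.cons_val_zero, Matrix.cons_val_one,
      Int.norm_eq_abs] <;>
    exact abs_le_sqrt (by linarith [sq_nonneg (h.1 : ℝ), sq_nonneg (h.2 : ℝ)])

lemma summable_znorm_rpow_neg {p : ℝ} (hp : 2 < p) :
    Summable fun h : ℤ × ℤ => znorm h ^ (-p) := by
  have hsup : Summable fun h : ℤ × ℤ => ‖(finTwoArrowEquiv ℤ).symm h‖ ^ (-p) :=
    (finTwoArrowEquiv ℤ).symm.summable_iff.2 (EisensteinSeries.summable_one_div_norm_rpow hp)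
  refine hsup.of_nonneg_of_le (fun h => rpow_nonneg (znorm_nonneg _) _) fun h => ?_
  rcases eq_or_ne h 0 with rfl | hh
  · have hzero : znorm 0 = 0 := by simp [znorm]
    rw [hzero, zero_rpow (by linarith)]
    positivity
  · have hpos : 0 < ‖(finTwoArrowEquiv ℤ).symm h‖ :=
      norm_pos_iff.2 fun h0 => hh ((finTwoArrowEquiv ℤ).symm.injective (by simpa using h0))
    exact rpow_le_rpow_of_nonpos hpos (norm_finTwoArrowEquiv_symm_le_znorm h) (by linarith)

lemma summable_znorm_sub_rpow_neg {p : ℝ} (hp : 2 < p) (k : ℤ × ℤ) :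
    Summable fun h : ℤ × ℤ => znorm (k - h) ^ (-p) :=
  (Equiv.subLeft k).summable_iff.2 (summable_znorm_rpow_neg hp)

lemma summable_znorm_rpow_neg_mul_znorm_sub_rpow_neg {s : ℝ} (hs : 1 < s) (k : ℤ × ℤ) :
    Summable fun h : ℤ × ℤ => znorm h ^ (-s) * znorm (k - h) ^ (-s) := by
  have hp : 2 < 2 * s := by linarith
  have hsq : ∀ h : ℤ × ℤ, (znorm h ^ (-s)) ^ (2 : ℝ) = znorm h ^ (-(2 * s)) := fun h => by
    rw [← rpow_mul (znorm_nonneg _)]; ring_nf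
  refine summable_mul_of_Lp_Lq_of_nonneg HolderConjugate.two_two
    (fun h => rpow_nonneg (znorm_nonneg _) _) (fun h => rpow_nonneg (znorm_nonneg _) _) ?_ ?_
  · simpa only [hsq] using summable_znorm_rpow_neg hp
  · simpa only [hsq] using summable_znorm_sub_rpow_neg hp k

theorem statement_1_general (H : ℝ) (hH : 1 / 4 < H) (k : ℤ × ℤ) :
    Summable (fun h : {h : ℤ × ℤ // h ≠ 0 ∧ h ≠ k} =>
      1 / (znorm h.1 ^ (4 * H) * znorm (k - h.1) ^ (4 * H))) := by
  have hs : 1 < 4 * H := by linarith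
  refine ((summable_znorm_rpow_neg_mul_znorm_sub_rpow_neg hs k).comp_injective
    Subtype.val_injective).congr fun h => ?_
  simp only [Function.comp_apply, rpow_neg (znorm_nonneg _), one_div, mul_inv]

theorem statement_1 (H : ℝ) (hH : 1 / 4 < H) (k : ℤ × ℤ) (hk : k ≠ 0) :
    Summable (fun h : {h : ℤ × ℤ // h ≠ 0 ∧ h ≠ k} =>
      1 / (znorm h.1 ^ (4 * H) * znorm (k - h.1) ^ (4 * H))) :=
  statement_1_general H hH k
end

section
/- Let 1/4 < H < 1/2. There exists a constant M_H > 0 such that for every k ∈ ℤ²₀, ∑_{h ∈ ℤ²₀, h ≠ k} 1/(|h|^{4H} |k-h|^{4H}) ≤ M_H / |k|^{8H-2}. -/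
open Finset Real

theorem sum_Ioc_le_sub_of_le_sub {f g : ℕ → ℝ} {m N : ℕ} (hmN : m ≤ N)
    (hfg : ∀ n, m ≤ n → f (n + 1) ≤ g (n + 1) - g n) :
    ∑ n ∈ Ioc m N, f n ≤ g N - g m := by
  induction N, hmN using Nat.le_induction with
  | base => simp
  | succ N hmN ih => rw [sum_Ioc_succ_top hmN]; linarith [hfg N hmN]

theorem mul_rpow_sub_one_le_rpow_sub_rpow {a x : ℝ} (ha₀ : 0 ≤ a) (ha₁ : a ≤ 1) (hx : 1 ≤ x) :
    a * x ^ (a - 1) ≤ x ^ a - (x - 1) ^ a := by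
  have hx₀ : 0 < x := by linarith
  have hbern := rpow_one_add_le_one_add_mul_self (s := -x⁻¹)
    (by rw [neg_le_neg_iff]; exact inv_le_one_of_one_le₀ hx) ha₀ ha₁
  have hsplit : x - 1 = x * (1 + -x⁻¹) := by field_simp; ring
  have hnonneg : 0 ≤ 1 + -x⁻¹ := by linarith [inv_le_one_of_one_le₀ hx]
  rw [hsplit, mul_rpow hx₀.le hnonneg, rpow_sub_one hx₀.ne']
  have := mul_le_mul_of_nonneg_left hbern (rpow_nonneg hx₀.le a)
  linarith [show x ^ a * (1 + a * -x⁻¹) = x ^ a - a * (x ^ a / x) by ring]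

theorem one_add_mul_one_sub_le_rpow_neg {e y : ℝ} (he : 0 ≤ e) (hy : 0 < y) :
    1 + e * (1 - y) ≤ y ^ (-e) := by
  rw [rpow_def_of_pos hy]
  have hlog := log_le_sub_one_of_pos hy
  nlinarith [add_one_le_exp (log y * -e)]

theorem mul_rpow_neg_sub_one_le_rpow_neg_sub_rpow_neg {e x : ℝ} (he : 0 ≤ e) (hx : 0 < x) :
    e * (x + 1) ^ (-e - 1) ≤ x ^ (-e) - (x + 1) ^ (-e) := by
  have hx₁ : 0 < x + 1 := by linarith
  have hbern := one_add_mul_one_sub_le_rpow_neg he (div_pos hx hx₁)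
  rw [div_rpow hx.le hx₁.le, le_div_iff₀ (rpow_pos_of_pos hx₁ _),
    show 1 - x / (x + 1) = (x + 1)⁻¹ by field_simp; ring] at hbern
  rw [rpow_sub_one hx₁.ne']
  linarith [show (1 + e * (x + 1)⁻¹) * (x + 1) ^ (-e)
    = (x + 1) ^ (-e) + e * ((x + 1) ^ (-e) / (x + 1)) by ring]

theorem sum_Ioc_rpow_sub_one_le {a : ℝ} (ha₀ : 0 < a) (ha₁ : a ≤ 1) (N : ℕ) :
    ∑ n ∈ Ioc 0 N, (n : ℝ) ^ (a - 1) ≤ (N : ℝ) ^ a / a := by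
  have := sum_Ioc_le_sub_of_le_sub (f := fun n : ℕ ↦ (n : ℝ) ^ (a - 1))
    (g := fun n : ℕ ↦ (n : ℝ) ^ a / a) (Nat.zero_le N) fun n _ ↦ by
      have h := mul_rpow_sub_one_le_rpow_sub_rpow ha₀.le ha₁ (x := (n + 1 : ℕ))
        (by exact_mod_cast Nat.succ_pos n)
      rw [Nat.cast_succ, add_sub_cancel_right] at h
      have key : ((n : ℝ) + 1) ^ (a - 1) ≤ (((n : ℝ) + 1) ^ a - (n : ℝ) ^ a) / a := by
        rw [le_div_iff₀ ha₀]; linarith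
      push_cast; rwa [← sub_div]
  simpa [zero_rpow ha₀.ne'] using this

theorem sum_Ioc_rpow_neg_sub_one_le {e : ℝ} (he : 0 < e) {m : ℕ} (hm : 0 < m) (N : ℕ) :
    ∑ n ∈ Ioc m N, (n : ℝ) ^ (-e - 1) ≤ (m : ℝ) ^ (-e) / e := by
  rcases le_total m N with hmN | hNm
  · have := sum_Ioc_le_sub_of_le_sub (f := fun n : ℕ ↦ (n : ℝ) ^ (-e - 1))
      (g := fun n : ℕ ↦ -(n : ℝ) ^ (-e) / e) hmN fun n hn ↦ by
        have h := mul_rpow_neg_sub_one_le_rpow_neg_sub_rpow_neg he.le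
          (x := n) (by exact_mod_cast hm.trans_le hn)
        rw [neg_div, neg_div, sub_neg_eq_add, neg_add_eq_sub, ← sub_div, le_div_iff₀ he]
        push_cast; linarith
    have : 0 ≤ (N : ℝ) ^ (-e) / e := by positivity
    linarith [neg_div e ((N : ℝ) ^ (-e)), neg_div e ((m : ℝ) ^ (-e))]
  · rw [Ioc_eq_empty (by omega), sum_empty]; positivity

theorem Int.norm_prod_eq_max_natAbs (h : ℤ × ℤ) : ‖h‖ = (max h.1.natAbs h.2.natAbs : ℕ) := by
  simp [Prod.norm_def, Int.norm_eq_abs, Nat.cast_max]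

theorem Int.one_le_norm_prod_of_ne_zero {h : ℤ × ℤ} (hh : h ≠ 0) : 1 ≤ ‖h‖ := by
  rw [Int.norm_prod_eq_max_natAbs, Nat.one_le_cast, Nat.one_le_iff_ne_zero]
  intro h0
  exact hh (by simpa using (Int.mem_box (n := 0)).2 h0)

theorem sum_rpow_neg_norm_le_sum_Ioc (s : ℝ) {t : Finset (ℤ × ℤ)} {m N : ℕ}
    (ht : ∀ h ∈ t, (m : ℝ) < ‖h‖ ∧ ‖h‖ ≤ N) :
    ∑ h ∈ t, ‖h‖ ^ (-s) ≤ 8 * ∑ n ∈ Ioc m N, (n : ℝ) ^ (1 - s) := by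
  set ν : ℤ × ℤ → ℕ := fun h ↦ max h.1.natAbs h.2.natAbs
  have hmaps : ∀ h ∈ t, ν h ∈ Ioc m N := fun h hh ↦ by
    have := ht h hh
    rw [Int.norm_prod_eq_max_natAbs] at this
    exact mem_Ioc.2 ⟨by exact_mod_cast this.1, by exact_mod_cast this.2⟩
  rw [← sum_fiberwise_of_maps_to hmaps, mul_sum]
  refine sum_le_sum fun n hn ↦ ?_
  have hn₀ : n ≠ 0 := (Nat.zero_lt_of_lt (mem_Ioc.1 hn).1).ne'
  have hfiber : t.filter (fun h ↦ ν h = n) ⊆ Finset.box n := fun h hh ↦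
    Int.mem_box.2 (mem_filter.1 hh).2
  calc ∑ h ∈ t with ν h = n, ‖h‖ ^ (-s)
      = #(t.filter (fun h ↦ ν h = n)) * (n : ℝ) ^ (-s) := by
        rw [sum_eq_card_nsmul fun h hh ↦ by
          rw [Int.norm_prod_eq_max_natAbs]
          exact congrArg (fun j : ℕ ↦ (j : ℝ) ^ (-s)) (mem_filter.1 hh).2,
          nsmul_eq_mul]
    _ ≤ #(Finset.box n : Finset (ℤ × ℤ)) * (n : ℝ) ^ (-s) := by
        gcongr
    _ = 8 * (n : ℝ) ^ (1 - s) := by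
        rw [Int.card_box hn₀, sub_eq_add_neg, rpow_add (by positivity), rpow_one]
        push_cast; ring

theorem sum_rpow_neg_norm_le_of_norm_le {s r : ℝ} (hs₁ : 1 ≤ s) (hs₂ : s < 2) (hr : 0 ≤ r)
    {t : Finset (ℤ × ℤ)} (ht : ∀ h ∈ t, h ≠ 0 ∧ ‖h‖ ≤ r) :
    ∑ h ∈ t, ‖h‖ ^ (-s) ≤ 8 / (2 - s) * r ^ (2 - s) := by
  have hbound : ∀ h ∈ t, ((0 : ℕ) : ℝ) < ‖h‖ ∧ ‖h‖ ≤ (⌊r⌋₊ : ℕ) := fun h hh ↦ by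
    obtain ⟨hh₀, hhr⟩ := ht h hh
    refine ⟨by simpa using (Int.one_le_norm_prod_of_ne_zero hh₀).trans_lt' one_pos, ?_⟩
    rw [Int.norm_prod_eq_max_natAbs] at hhr ⊢
    exact_mod_cast Nat.le_floor hhr
  calc ∑ h ∈ t, ‖h‖ ^ (-s)
      ≤ 8 * ∑ n ∈ Ioc 0 ⌊r⌋₊, (n : ℝ) ^ ((2 - s) - 1) := by
        rw [show (2 - s) - 1 = 1 - s by ring]
        exact sum_rpow_neg_norm_le_sum_Ioc s hbound
    _ ≤ 8 * ((⌊r⌋₊ : ℝ) ^ (2 - s) / (2 - s)) := by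
        gcongr
        exact sum_Ioc_rpow_sub_one_le (by linarith) (by linarith) _
    _ ≤ 8 * (r ^ (2 - s) / (2 - s)) := by
        have : 0 < 2 - s := by linarith
        gcongr
        exact Nat.floor_le hr
    _ = 8 / (2 - s) * r ^ (2 - s) := by ring

theorem sum_rpow_neg_norm_le_of_lt_norm {s r : ℝ} (hs : 2 < s) (hr : 1 ≤ r)
    {t : Finset (ℤ × ℤ)} (ht : ∀ h ∈ t, r < ‖h‖) :
    ∑ h ∈ t, ‖h‖ ^ (-s) ≤ 8 * 2 ^ (s - 2) / (s - 2) * r ^ (2 - s) := by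
  set m := ⌊r⌋₊
  set ν : ℤ × ℤ → ℕ := fun h ↦ max h.1.natAbs h.2.natAbs
  have hm : 1 ≤ m := Nat.le_floor (by exact_mod_cast hr)
  have hmr : r / 2 ≤ m := by
    have := Nat.lt_floor_add_one r
    have : (1 : ℝ) ≤ m := by exact_mod_cast hm
    linarith
  have hbound : ∀ h ∈ t, (m : ℝ) < ‖h‖ ∧ ‖h‖ ≤ (t.sup ν : ℕ) := fun h hh ↦ by
    refine ⟨(Nat.floor_le (by linarith)).trans_lt (ht h hh), ?_⟩
    rw [Int.norm_prod_eq_max_natAbs]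
    exact_mod_cast le_sup (f := ν) hh
  calc ∑ h ∈ t, ‖h‖ ^ (-s)
      ≤ 8 * ∑ n ∈ Ioc m (t.sup ν), (n : ℝ) ^ (-(s - 2) - 1) := by
        rw [show -(s - 2) - 1 = 1 - s by ring]
        exact sum_rpow_neg_norm_le_sum_Ioc s hbound
    _ ≤ 8 * ((m : ℝ) ^ (-(s - 2)) / (s - 2)) := by
        gcongr
        exact sum_Ioc_rpow_neg_sub_one_le (by linarith) hm _
    _ ≤ 8 * ((r / 2) ^ (2 - s) / (s - 2)) := by
        have : 0 < s - 2 := by linarith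
        rw [neg_sub]
        gcongr 8 * (?_ / _)
        exact rpow_le_rpow_of_nonpos (by linarith) hmr (by linarith)
    _ = 8 * 2 ^ (s - 2) / (s - 2) * r ^ (2 - s) := by
        rw [div_rpow (by linarith) zero_le_two, show s - 2 = -(2 - s) by ring,
          rpow_neg zero_le_two]
        ring

theorem znorm_eq_norm_complex (k : ℤ × ℤ) : znorm k = ‖(⟨k.1, k.2⟩ : ℂ)‖ := by
  rw [Complex.norm_eq_sqrt_sq_add_sq]; rfl

theorem znorm_le_add (k h : ℤ × ℤ) : znorm k ≤ znorm h + znorm (k - h) := by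
  have hsplit : (⟨k.1, k.2⟩ : ℂ) = ⟨h.1, h.2⟩ + ⟨(k - h).1, (k - h).2⟩ := by
    apply Complex.ext <;> simp
  simp only [znorm_eq_norm_complex, hsplit]
  exact norm_add_le _ _

theorem norm_le_znorm (k : ℤ × ℤ) : ‖k‖ ≤ znorm k := by
  rw [Prod.norm_def, Int.norm_eq_abs, Int.norm_eq_abs]
  exact max_le (abs_le_sqrt (by nlinarith)) (abs_le_sqrt (by nlinarith))

theorem one_le_znorm {k : ℤ × ℤ} (hk : k ≠ 0) : 1 ≤ znorm k :=
  (Int.one_le_norm_prod_of_ne_zero hk).trans (norm_le_znorm k)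

theorem one_div_rpow_mul_rpow_le {a b A B p : ℝ} (ha : 0 < a) (hb : 0 < b) (haA : a ≤ A)
    (hbB : b ≤ B) (hp : 0 ≤ p) : 1 / (A ^ p * B ^ p) ≤ a ^ (-p) * b ^ (-p) := by
  rw [rpow_neg ha.le, rpow_neg hb.le, ← mul_inv, one_div]
  have := rpow_nonneg (ha.le.trans haA) p
  gcongr

noncomputable def latticeConvConst (p : ℝ) : ℝ :=
  8 * 2 ^ p / (2 - p) + 8 * 2 ^ (2 * p - 2) / (2 * p - 2)

theorem latticeConvConst_pos {p : ℝ} (hp₁ : 1 < p) (hp₂ : p < 2) : 0 < latticeConvConst p := by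
  have : 0 < 2 - p := by linarith
  have : 0 < 2 * p - 2 := by linarith
  unfold latticeConvConst; positivity

theorem sum_one_div_znorm_rpow_mul_le_of_znorm_le {p : ℝ} (hp₁ : 1 < p) (hp₂ : p < 2)
    {k : ℤ × ℤ} (hk : k ≠ 0) {t : Finset (ℤ × ℤ)}
    (ht : ∀ h ∈ t, h ≠ 0 ∧ znorm h ≤ znorm (k - h)) :
    ∑ h ∈ t, 1 / (znorm h ^ p * znorm (k - h) ^ p)
      ≤ latticeConvConst p * znorm k ^ (2 - 2 * p) := by
  set R := znorm k
  have hR : 1 ≤ R := one_le_znorm hk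
  have hnorm_pos : ∀ h ∈ t, 0 < ‖h‖ := fun h hh ↦
    (Int.one_le_norm_prod_of_ne_zero (ht h hh).1).trans_lt' one_pos
  have hfar : ∀ h ∈ t, R / 2 ≤ znorm (k - h) := fun h hh ↦ by
    linarith [znorm_le_add k h, (ht h hh).2]
  rw [← sum_filter_add_sum_filter_not t (fun h ↦ ‖h‖ ≤ R), latticeConvConst, add_mul]
  apply add_le_add
  · calc ∑ h ∈ t with ‖h‖ ≤ R, 1 / (znorm h ^ p * znorm (k - h) ^ p)
        ≤ ∑ h ∈ t with ‖h‖ ≤ R, (R / 2) ^ (-p) * ‖h‖ ^ (-p) := by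
          refine sum_le_sum fun h hh ↦ ?_
          have hh := (mem_filter.1 hh).1
          rw [mul_comm ((R / 2) ^ (-p))]
          exact one_div_rpow_mul_rpow_le (hnorm_pos h hh) (by linarith) (norm_le_znorm h)
            (hfar h hh) (by linarith)
      _ = (R / 2) ^ (-p) * ∑ h ∈ t with ‖h‖ ≤ R, ‖h‖ ^ (-p) := (mul_sum _ _ _).symm
      _ ≤ (R / 2) ^ (-p) * (8 / (2 - p) * R ^ (2 - p)) := by
          gcongr
          refine sum_rpow_neg_norm_le_of_norm_le hp₁.le hp₂ (by linarith) fun h hh ↦ ?_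
          exact ⟨(ht h (mem_filter.1 hh).1).1, (mem_filter.1 hh).2⟩
      _ = 8 * 2 ^ p / (2 - p) * R ^ (2 - 2 * p) := by
          rw [div_rpow (by linarith) zero_le_two, rpow_neg zero_le_two,
            show 2 - 2 * p = -p + (2 - p) by ring, rpow_add (by linarith), div_inv_eq_mul]
          ring
  · calc ∑ h ∈ t with ¬‖h‖ ≤ R, 1 / (znorm h ^ p * znorm (k - h) ^ p)
        ≤ ∑ h ∈ t with ¬‖h‖ ≤ R, ‖h‖ ^ (-(2 * p)) := by
          refine sum_le_sum fun h hh ↦ ?_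
          have hh := (mem_filter.1 hh).1
          rw [show -(2 * p) = -p + -p by ring, rpow_add (hnorm_pos h hh)]
          exact one_div_rpow_mul_rpow_le (hnorm_pos h hh) (hnorm_pos h hh) (norm_le_znorm h)
            ((norm_le_znorm h).trans (ht h hh).2) (by linarith)
      _ ≤ 8 * 2 ^ (2 * p - 2) / (2 * p - 2) * R ^ (2 - 2 * p) :=
          sum_rpow_neg_norm_le_of_lt_norm (by linarith) hR fun h hh ↦
            lt_of_not_ge (mem_filter.1 hh).2

theorem sum_one_div_znorm_rpow_mul_le {p : ℝ} (hp₁ : 1 < p) (hp₂ : p < 2)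
    {k : ℤ × ℤ} (hk : k ≠ 0) {t : Finset (ℤ × ℤ)} (ht : ∀ h ∈ t, h ≠ 0 ∧ h ≠ k) :
    ∑ h ∈ t, 1 / (znorm h ^ p * znorm (k - h) ^ p)
      ≤ 2 * latticeConvConst p * znorm k ^ (2 - 2 * p) := by
  rw [← sum_filter_add_sum_filter_not t (fun h ↦ znorm h ≤ znorm (k - h)), mul_assoc, two_mul]
  apply add_le_add
  · exact sum_one_div_znorm_rpow_mul_le_of_znorm_le hp₁ hp₂ hk fun h hh ↦
      ⟨(ht h (mem_filter.1 hh).1).1, (mem_filter.1 hh).2⟩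
  · set s := t.filter fun h ↦ ¬znorm h ≤ znorm (k - h)
    have hreflect : ∑ h ∈ s, 1 / (znorm h ^ p * znorm (k - h) ^ p)
        = ∑ g ∈ s.image (k - ·), 1 / (znorm g ^ p * znorm (k - g) ^ p) := by
      rw [sum_image sub_right_injective.injOn]
      refine sum_congr rfl fun h _ ↦ ?_
      rw [sub_sub_cancel, mul_comm]
    rw [hreflect]
    refine sum_one_div_znorm_rpow_mul_le_of_znorm_le hp₁ hp₂ hk fun g hg ↦ ?_
    obtain ⟨h, hh, rfl⟩ := mem_image.1 hg
    obtain ⟨⟨-, hhk⟩, hlt⟩ := (mem_filter.1 hh).imp_left (ht h)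
    rw [sub_sub_cancel]
    exact ⟨sub_ne_zero.2 (Ne.symm hhk), (lt_of_not_ge hlt).le⟩

theorem statement_2 (H : ℝ) (hH1 : 1 / 4 < H) (hH2 : H < 1 / 2) :
    ∃ M : ℝ, 0 < M ∧ ∀ k : ℤ × ℤ, k ≠ 0 →
      (∑' h : {h : ℤ × ℤ // h ≠ 0 ∧ h ≠ k},
          1 / (znorm h.1 ^ (4 * H) * znorm (k - h.1) ^ (4 * H)))
        ≤ M / znorm k ^ (8 * H - 2) := by
  have hp₁ : 1 < 4 * H := by linarith
  have hp₂ : 4 * H < 2 := by linarith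
  have hC := latticeConvConst_pos hp₁ hp₂
  refine ⟨2 * latticeConvConst (4 * H), by positivity, fun k hk ↦ ?_⟩
  have hR : 0 < znorm k := (one_le_znorm hk).trans_lt' one_pos
  rw [div_eq_mul_inv, ← rpow_neg hR.le, show -(8 * H - 2) = 2 - 2 * (4 * H) by ring]
  refine tsum_le_of_sum_le' (by positivity) fun u ↦ ?_
  refine (sum_map u (Function.Embedding.subtype _) fun h ↦
    1 / (znorm h ^ (4 * H) * znorm (k - h) ^ (4 * H))).symm.trans_le ?_
  exact sum_one_div_znorm_rpow_mul_le hp₁ hp₂ hk fun h hh ↦ by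
    obtain ⟨x, -, rfl⟩ := mem_map.1 hh
    exact x.2
end

section
/- Let H = 1/2. There exists a constant M > 0 such that for every k ∈ ℤ²₀ with |k| ≥ 2, ∑_{h ∈ ℤ²₀, h ≠ k} 1/(|h|² |k-h|²) ≤ M (ln |k|) / |k|². -/
open Finset Real

namespace LatticeConvolution

def supNorm (x : ℤ × ℤ) : ℕ := max x.1.natAbs x.2.natAbs

lemma one_le_supNorm {x : ℤ × ℤ} (hx : x ≠ 0) : 1 ≤ supNorm x := by
  rcases x with ⟨a, b⟩
  simp only [ne_eq, Prod.mk_eq_zero, not_and_or] at hx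
  simp only [supNorm]
  omega

lemma supNorm_le_add_supNorm_sub (k h : ℤ × ℤ) : supNorm k ≤ supNorm h + supNorm (k - h) := by
  simp only [supNorm, Prod.fst_sub, Prod.snd_sub]
  omega

lemma abs_fst_le_supNorm (x : ℤ × ℤ) : |(x.1 : ℝ)| ≤ supNorm x := by
  rw [supNorm, Nat.cast_max, Nat.cast_natAbs, Int.cast_abs]
  exact le_max_left _ _

lemma abs_snd_le_supNorm (x : ℤ × ℤ) : |(x.2 : ℝ)| ≤ supNorm x := by
  rw [supNorm, Nat.cast_max, Nat.cast_natAbs x.2, Int.cast_abs]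
  exact le_max_right _ _

lemma supNorm_le_znorm (x : ℤ × ℤ) : (supNorm x : ℝ) ≤ znorm x := by
  rw [supNorm, Nat.cast_max]
  apply max_le <;> rw [Nat.cast_natAbs, Int.cast_abs] <;> apply Real.abs_le_sqrt <;>
    nlinarith [sq_nonneg (x.1 : ℝ), sq_nonneg (x.2 : ℝ)]

lemma znorm_sq_le (x : ℤ × ℤ) : znorm x ^ 2 ≤ 2 * (supNorm x : ℝ) ^ 2 := by
  have h1 := pow_le_pow_left₀ (abs_nonneg _) (abs_fst_le_supNorm x) 2
  have h2 := pow_le_pow_left₀ (abs_nonneg _) (abs_snd_le_supNorm x) 2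
  rw [sq_abs] at h1 h2
  rw [znorm, Real.sq_sqrt (by positivity)]
  linarith

lemma sum_comp_supNorm_le {ι : Type*} {e : ι → ℤ × ℤ} (he : Function.Injective e)
    (he0 : ∀ i, e i ≠ 0) {φ : ℕ → ℝ} (hφ : ∀ j, 0 ≤ φ j) {B : ℝ}
    (hB : ∀ N : ℕ, ∑ j ∈ Icc 1 N, 8 * (j : ℝ) * φ j ≤ B) (s : Finset ι) :
    ∑ i ∈ s, φ (supNorm (e i)) ≤ B := by
  classical
  set g : ι → ℕ := fun i => supNorm (e i)
  have hcard : ∀ j ∈ s.image g, (#{i ∈ s | g i = j} : ℝ) ≤ 8 * j := by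
    intro j hj
    obtain ⟨i, -, rfl⟩ := mem_image.mp hj
    have hbox := Int.card_box (Nat.one_le_iff_ne_zero.mp (one_le_supNorm (he0 i)))
    have hle : #{i' ∈ s | g i' = g i} ≤ #(box (g i) : Finset (ℤ × ℤ)) :=
      card_le_card_of_injOn e (fun i' hi' => Int.mem_box.mpr (mem_filter.mp hi').2) he.injOn
    exact_mod_cast hbox ▸ hle
  have hsub : s.image g ⊆ Icc 1 (s.sup g) := fun j hj => by
    obtain ⟨i, hi, rfl⟩ := mem_image.mp hj
    exact mem_Icc.mpr ⟨one_le_supNorm (he0 i), le_sup hi⟩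
  calc ∑ i ∈ s, φ (g i) = ∑ j ∈ s.image g, #{i ∈ s | g i = j} • φ j := sum_comp φ g
    _ ≤ ∑ j ∈ s.image g, 8 * (j : ℝ) * φ j :=
        sum_le_sum fun j hj => by
          rw [nsmul_eq_mul]
          exact mul_le_mul_of_nonneg_right (hcard j hj) (hφ j)
    _ ≤ ∑ j ∈ Icc 1 (s.sup g), 8 * (j : ℝ) * φ j :=
        sum_le_sum_of_subset_of_nonneg hsub fun j _ _ => mul_nonneg (by positivity) (hφ j)
    _ ≤ B := hB _

noncomputable def radialMajorant (n j : ℕ) : ℝ :=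
  if j ≤ n then 4 / ((n : ℝ) ^ 2 * (j : ℝ) ^ 2) else 1 / (j : ℝ) ^ 4

lemma radialMajorant_nonneg (n j : ℕ) : 0 ≤ radialMajorant n j := by
  unfold radialMajorant
  split_ifs <;> positivity

lemma one_div_sq_mul_sq_le_radialMajorant {n a b : ℕ} (hn : 1 ≤ n) (ha : 1 ≤ a) (hab : a ≤ b)
    (hnab : n ≤ a + b) : 1 / ((a : ℝ) ^ 2 * (b : ℝ) ^ 2) ≤ radialMajorant n a := by
  have hn' : (1 : ℝ) ≤ n := by exact_mod_cast hn
  have ha' : (1 : ℝ) ≤ a := by exact_mod_cast ha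
  have hab' : (a : ℝ) ≤ b := by exact_mod_cast hab
  unfold radialMajorant
  split_ifs with han
  · have hnb : (n : ℝ) ≤ 2 * b := by exact_mod_cast (by omega : n ≤ 2 * b)
    have hb0 : (0 : ℝ) < b := by linarith
    rw [div_le_div_iff₀ (mul_pos (pow_pos (by linarith) 2) (pow_pos hb0 2))
      (mul_pos (pow_pos (by linarith) 2) (pow_pos (by linarith) 2))]
    nlinarith [mul_le_mul_of_nonneg_left (pow_le_pow_left₀ (by positivity) hnb 2)
      (sq_nonneg (a : ℝ))]
  · exact one_div_le_one_div_of_le (by positivity) (by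
      rw [show (a : ℝ) ^ 4 = a ^ 2 * a ^ 2 by ring]
      gcongr)

lemma sum_shells_radialMajorant_le {n : ℕ} (hn : 1 ≤ n) (N : ℕ) :
    ∑ j ∈ Icc 1 N, 8 * (j : ℝ) * radialMajorant n j ≤ (32 * (1 + log n) + 16) / (n : ℝ) ^ 2 := by
  have hn' : (0 : ℝ) < n := by exact_mod_cast hn
  have hinner : ∑ j ∈ Icc 1 N with j ≤ n, 8 * (j : ℝ) * radialMajorant n j
      ≤ 32 * (1 + log n) / (n : ℝ) ^ 2 :=
    calc _ = ∑ j ∈ Icc 1 N with j ≤ n, 32 / (n : ℝ) ^ 2 * (j : ℝ)⁻¹ := by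
          refine sum_congr rfl fun j hj => ?_
          obtain ⟨hjI, hjn⟩ := mem_filter.mp hj
          have hj0 : (0 : ℝ) < j := by exact_mod_cast (mem_Icc.mp hjI).1
          rw [radialMajorant, if_pos hjn]
          field_simp
          ring
      _ ≤ ∑ j ∈ Icc 1 n, 32 / (n : ℝ) ^ 2 * (j : ℝ)⁻¹ :=
          sum_le_sum_of_subset_of_nonneg
            (fun j hj => by simp only [mem_filter, mem_Icc] at hj ⊢; omega)
            fun _ _ _ => by positivity
      _ = 32 / (n : ℝ) ^ 2 * harmonic n := by rw [harmonic_eq_sum_Icc]; push_cast; rw [mul_sum]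
      _ ≤ 32 / (n : ℝ) ^ 2 * (1 + log n) := by gcongr; exact harmonic_le_one_add_log n
      _ = 32 * (1 + log n) / (n : ℝ) ^ 2 := by ring
  have houter : ∑ j ∈ Icc 1 N with ¬ j ≤ n, 8 * (j : ℝ) * radialMajorant n j
      ≤ 16 / (n : ℝ) ^ 2 :=
    calc _ ≤ ∑ j ∈ Icc 1 N with ¬ j ≤ n, 8 / (n : ℝ) * ((j : ℝ) ^ 2)⁻¹ := by
          refine sum_le_sum fun j hj => ?_
          obtain ⟨-, hjn⟩ := mem_filter.mp hj
          have hnj : (n : ℝ) ≤ j := by exact_mod_cast (not_le.mp hjn).le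
          have hj0 : (0 : ℝ) < j := by linarith
          calc 8 * (j : ℝ) * radialMajorant n j = 8 / (j : ℝ) * ((j : ℝ) ^ 2)⁻¹ := by
                rw [radialMajorant, if_neg hjn]; field_simp
            _ ≤ 8 / (n : ℝ) * ((j : ℝ) ^ 2)⁻¹ := by gcongr
      _ ≤ ∑ j ∈ Ioo n (N + 1), 8 / (n : ℝ) * ((j : ℝ) ^ 2)⁻¹ :=
          sum_le_sum_of_subset_of_nonneg
            (fun j hj => by simp only [mem_filter, mem_Icc, mem_Ioo] at hj ⊢; omega)
            fun _ _ _ => by positivity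
      _ ≤ 8 / (n : ℝ) * (2 / (n + 1)) := by rw [← mul_sum]; gcongr; exact sum_Ioo_inv_sq_le _ _
      _ ≤ 16 / (n : ℝ) ^ 2 := by
          rw [div_mul_div_comm, div_le_div_iff₀ (by positivity) (by positivity)]
          nlinarith
  rw [← sum_filter_add_sum_filter_not _ (· ≤ n)]
  calc _ ≤ 32 * (1 + log n) / (n : ℝ) ^ 2 + 16 / (n : ℝ) ^ 2 := add_le_add hinner houter
    _ = _ := by ring

lemma one_div_znorm_sq_mul_le {k h : ℤ × ℤ} (hk : k ≠ 0) (h0 : h ≠ 0) (hhk : h ≠ k) :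
    1 / (znorm h ^ 2 * znorm (k - h) ^ 2)
      ≤ radialMajorant (supNorm k) (supNorm h) + radialMajorant (supNorm k) (supNorm (k - h)) := by
  have hkh : k - h ≠ 0 := sub_ne_zero.mpr (Ne.symm hhk)
  have ha := one_le_supNorm h0
  have hb := one_le_supNorm hkh
  have hn := one_le_supNorm hk
  have htri := supNorm_le_add_supNorm_sub k h
  have hsup : 1 / (znorm h ^ 2 * znorm (k - h) ^ 2)
      ≤ 1 / ((supNorm h : ℝ) ^ 2 * (supNorm (k - h) : ℝ) ^ 2) := by
    have ha' : (0 : ℝ) < supNorm h := by exact_mod_cast ha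
    have hb' : (0 : ℝ) < supNorm (k - h) := by exact_mod_cast hb
    gcongr <;> exact supNorm_le_znorm _
  have hwa := radialMajorant_nonneg (supNorm k) (supNorm h)
  have hwb := radialMajorant_nonneg (supNorm k) (supNorm (k - h))
  rcases le_total (supNorm h) (supNorm (k - h)) with hab | hba
  · linarith [one_div_sq_mul_sq_le_radialMajorant hn ha hab htri]
  · have := one_div_sq_mul_sq_le_radialMajorant hn hb hba (by omega)
    rw [mul_comm] at this
    linarith

lemma tsum_one_div_znorm_sq_mul_le {k : ℤ × ℤ} (hk : k ≠ 0) :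
    ∑' h : {h : ℤ × ℤ // h ≠ 0 ∧ h ≠ k}, 1 / (znorm h.1 ^ 2 * znorm (k - h.1) ^ 2)
      ≤ 2 * ((32 * (1 + log (supNorm k)) + 16) / (supNorm k : ℝ) ^ 2) := by
  have hB := sum_shells_radialMajorant_le (one_le_supNorm hk)
  have hsub_inj : Function.Injective fun h : {h : ℤ × ℤ // h ≠ 0 ∧ h ≠ k} => k - h.1 :=
    fun x y hxy => Subtype.ext (sub_right_injective hxy)
  have hfin : ∀ s : Finset {h : ℤ × ℤ // h ≠ 0 ∧ h ≠ k},
      ∑ h ∈ s, 1 / (znorm h.1 ^ 2 * znorm (k - h.1) ^ 2)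
        ≤ 2 * ((32 * (1 + log (supNorm k)) + 16) / (supNorm k : ℝ) ^ 2) := fun s =>
    calc _ ≤ ∑ h ∈ s, (radialMajorant (supNorm k) (supNorm h.1)
            + radialMajorant (supNorm k) (supNorm (k - h.1))) :=
          sum_le_sum fun h _ => one_div_znorm_sq_mul_le hk h.2.1 h.2.2
      _ = ∑ h ∈ s, radialMajorant (supNorm k) (supNorm h.1)
            + ∑ h ∈ s, radialMajorant (supNorm k) (supNorm (k - h.1)) := sum_add_distrib
      _ ≤ _ := by
          rw [two_mul]
          exact add_le_add
            (sum_comp_supNorm_le Subtype.val_injective (fun h => h.2.1)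
              (radialMajorant_nonneg _) hB s)
            (sum_comp_supNorm_le hsub_inj (fun h => sub_ne_zero.mpr (Ne.symm h.2.2))
              (radialMajorant_nonneg _) hB s)
  exact (summable_of_sum_le (fun _ => by positivity) hfin).tsum_le_of_sum_le hfin

end LatticeConvolution

open LatticeConvolution

theorem statement_3 :
    ∃ M : ℝ, 0 < M ∧ ∀ k : ℤ × ℤ, k ≠ 0 → 2 ≤ znorm k →
      (∑' h : {h : ℤ × ℤ // h ≠ 0 ∧ h ≠ k},
          1 / (znorm h.1 ^ 2 * znorm (k - h.1) ^ 2))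
        ≤ M * Real.log (znorm k) / znorm k ^ 2 := by
  refine ⟨406, by norm_num, fun k hk0 hk2 => (tsum_one_div_znorm_sq_mul_le hk0).trans ?_⟩
  have hn : (1 : ℝ) ≤ supNorm k := by exact_mod_cast one_le_supNorm hk0
  set n : ℝ := (supNorm k : ℝ)
  set c := znorm k
  have hlog : log n ≤ log c := log_le_log (by linarith) (supNorm_le_znorm k)
  have hlog2 : log 2 ≤ log c := log_le_log (by norm_num) hk2
  have hnum : 2 * (32 * (1 + log n) + 16) ≤ 203 * log c := by
    linarith [log_two_gt_d9]
  calc 2 * ((32 * (1 + log n) + 16) / n ^ 2) ≤ 203 * log c / n ^ 2 := by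
        rw [← mul_div_assoc]; gcongr
    _ ≤ 406 * log c / c ^ 2 := by
        rw [div_le_div_iff₀ (by positivity) (by positivity)]
        nlinarith [znorm_sq_le k, log_nonneg (by linarith : (1 : ℝ) ≤ c)]
end

section
/- Let H > 1/4 and for a real number a ≥ 2 let D̃_a = ℝ² \ (B₁((0,0)) ∪ B₁((a,0))), where B₁(c) is the open unit ball centered at c, and let I₁(a) = ∫∫_{D̃_a} dx dy / ((x² + y²)^{2H} ((x-a)² + y²)^{2H}). Then I₁(a) is finite for all a ≥ 2, and there exist constants (independent of a): M_H > 0 with I₁(a) ≤ M_H a^{-(8H-2)} for all a ≥ 2 if 1/4 < H < 1/2; M > 0 with I₁(a) ≤ M (ln a)/a² for all a ≥ 2 if H = 1/2; and M_H > 0 with I₁(a) ≤ M_H a^{-4H} for all a ≥ 2 if H > 1/2. -/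
open MeasureTheory

/-- The region `ℝ² \ (B₁((0,0)) ∪ B₁((a,0)))`: the plane with the two open unit balls
centered at the origin and at `(a,0)` removed. -/
def Dtilde (a : ℝ) : Set (ℝ × ℝ) :=
  {p : ℝ × ℝ | 1 ≤ p.1 ^ 2 + p.2 ^ 2 ∧ 1 ≤ (p.1 - a) ^ 2 + p.2 ^ 2}

/-!
Write `‖·‖` for the sup norm of `ℝ × ℝ`. On `D̃_a` the nearer of the two centres is at
Euclidean distance `≥ 1` and the farther one at distance `≥ a / 2`, so the integrand is at most
`φ ‖p‖ + φ ‖p - (a, 0)‖` with `φ r = (max 1 r * max (a / 2) r) ^ (-4H)`. Integrating a function of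
the norm over the plane reduces to `8 ∫₀^∞ r φ r dr`, and splitting at `1` and `A = a / 2` gives
`A^(-b) / 2 + A^(-b) ∫₁^A r^(1-b) dr + A^(2-2b) / (2b - 2)` with `b = 4H > 1`. The middle integral
grows like `A^(2-b)`, `log A` or stays bounded according as `b < 2`, `b = 2`, `b > 2`, which
gives the three regimes.
-/

open Set

noncomputable def radialMajorant (b A r : ℝ) : ℝ := (max 1 r * max A r) ^ (-b)

section RadialMajorant

variable {b A : ℝ}

lemma max_one_mul_max_pos (hA : 0 < A) (r : ℝ) : 0 < max 1 r * max A r :=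
  mul_pos (one_pos.trans_le (le_max_left _ _)) (hA.trans_le (le_max_left _ _))

lemma radialMajorant_nonneg (b A : ℝ) {r : ℝ} (hr : 0 ≤ r) : 0 ≤ radialMajorant b A r :=
  Real.rpow_nonneg
    (mul_nonneg (zero_le_one.trans (le_max_left _ _)) (hr.trans (le_max_right _ _))) _

lemma continuous_radialMajorant (b : ℝ) (hA : 0 < A) : Continuous (radialMajorant b A) :=
  ((continuous_const.max continuous_id).mul (continuous_const.max continuous_id)).rpow_const
    fun r => Or.inl (max_one_mul_max_pos hA r).ne'

lemma mul_radialMajorant_of_le_one (hA : 1 ≤ A) {r : ℝ} (hr : r ≤ 1) :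
    r * radialMajorant b A r = A ^ (-b) * r := by
  rw [radialMajorant, max_eq_left hr, max_eq_left (hr.trans hA), one_mul, mul_comm]

lemma mul_radialMajorant_of_mem_Icc {r : ℝ} (hr : r ∈ Icc 1 A) :
    r * radialMajorant b A r = A ^ (-b) * r ^ (1 - b) := by
  have hr0 : 0 < r := one_pos.trans_le hr.1
  rw [radialMajorant, max_eq_right hr.1, max_eq_left hr.2, Real.mul_rpow hr0.le (hr0.le.trans hr.2),
    sub_eq_add_neg, Real.rpow_add hr0, Real.rpow_one]
  ring

lemma mul_radialMajorant_of_le (hA : 1 ≤ A) {r : ℝ} (hr : A ≤ r) :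
    r * radialMajorant b A r = r ^ (1 - 2 * b) := by
  have hr0 : 0 < r := one_pos.trans_le (hA.trans hr)
  rw [radialMajorant, max_eq_right (hA.trans hr), max_eq_right hr, ← sq, ← Real.rpow_two,
    ← Real.rpow_mul hr0.le, show 1 - 2 * b = 1 + 2 * -b by ring, Real.rpow_add hr0, Real.rpow_one]

lemma integrableOn_mul_radialMajorant (hb : 1 < b) (hA : 1 ≤ A) :
    IntegrableOn (fun r => r * radialMajorant b A r) (Ioi 0) := by
  have hcont : Continuous fun r => r * radialMajorant b A r :=
    continuous_id.mul (continuous_radialMajorant b (one_pos.trans_le hA))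
  have htail : IntegrableOn (fun r => r * radialMajorant b A r) (Ioi A) :=
    (integrableOn_Ioi_rpow_of_lt (by linarith) (one_pos.trans_le hA)).congr_fun
      (fun r hr => (mul_radialMajorant_of_le hA (le_of_lt hr)).symm) measurableSet_Ioi
  rw [← Ioc_union_Ioi_eq_Ioi (zero_le_one.trans hA)]
  exact (hcont.integrableOn_Icc.mono_set Ioc_subset_Icc_self).union htail

lemma integral_mul_radialMajorant (hb : 1 < b) (hA : 1 ≤ A) :
    ∫ r in Ioi 0, r * radialMajorant b A r =
      A ^ (-b) / 2 + A ^ (-b) * (∫ r in 1..A, r ^ (1 - b)) + A ^ (2 - 2 * b) / (2 * b - 2) := by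
  have hA0 : 0 < A := one_pos.trans_le hA
  have hcont : Continuous fun r => r * radialMajorant b A r :=
    continuous_id.mul (continuous_radialMajorant b hA0)
  have hhead : ∫ r in (0 : ℝ)..1, r * radialMajorant b A r = A ^ (-b) / 2 := by
    rw [intervalIntegral.integral_congr fun r hr => mul_radialMajorant_of_le_one hA
      (by rw [uIcc_of_le zero_le_one] at hr; exact hr.2), intervalIntegral.integral_const_mul,
      integral_id]
    ring
  have hmiddle : ∫ r in (1 : ℝ)..A, r * radialMajorant b A r =
      A ^ (-b) * ∫ r in (1 : ℝ)..A, r ^ (1 - b) := by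
    rw [intervalIntegral.integral_congr fun r hr => mul_radialMajorant_of_mem_Icc
      (by rwa [uIcc_of_le hA] at hr), intervalIntegral.integral_const_mul]
  have htail : ∫ r in Ioi A, r * radialMajorant b A r = A ^ (2 - 2 * b) / (2 * b - 2) := by
    rw [setIntegral_congr_fun measurableSet_Ioi fun r hr => mul_radialMajorant_of_le hA
      (le_of_lt hr), integral_Ioi_rpow_of_lt (by linarith) hA0,
      show 1 - 2 * b + 1 = 2 - 2 * b by ring,
      neg_div, ← div_neg, neg_sub]
  rw [← intervalIntegral.integral_interval_add_Ioi' (hcont.intervalIntegrable 0 A)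
    ((integrableOn_mul_radialMajorant hb hA).mono_set (Ioi_subset_Ioi hA0.le)),
    ← intervalIntegral.integral_add_adjacent_intervals (hcont.intervalIntegrable 0 1)
      (hcont.intervalIntegrable 1 A), hhead, hmiddle, htail]

lemma zero_notMem_uIcc_one {A : ℝ} (hA : 1 ≤ A) : (0 : ℝ) ∉ uIcc 1 A := by
  rw [uIcc_of_le hA]
  exact fun h => by linarith [h.1]

lemma exists_integral_mul_radialMajorant_le_of_lt_two (hb₁ : 1 < b) (hb₂ : b < 2) :
    ∃ C, 0 < C ∧ ∀ A, 1 ≤ A →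
      ∫ r in Ioi 0, r * radialMajorant b A r ≤ C * A ^ (-(2 * b - 2)) := by
  have h₁ : 0 < 2 - b := by linarith
  have h₂ : 0 < 2 * b - 2 := by linarith
  refine ⟨1 / 2 + 1 / (2 - b) + 1 / (2 * b - 2), by positivity, fun A hA => ?_⟩
  have hA0 : 0 < A := one_pos.trans_le hA
  have hmul : A ^ (-b) * A ^ (2 - b) = A ^ (-(2 * b - 2)) := by
    rw [← Real.rpow_add hA0]; congr 1; ring
  set X := A ^ (-(2 * b - 2))
  have hle : A ^ (-b) ≤ X := Real.rpow_le_rpow_of_exponent_le hA (by linarith)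
  have hnonneg : 0 ≤ A ^ (-b) := Real.rpow_nonneg hA0.le _
  rw [integral_mul_radialMajorant hb₁ hA, integral_rpow (Or.inl (by linarith)), Real.one_rpow,
    show 1 - b + 1 = 2 - b by ring, show 2 - 2 * b = -(2 * b - 2) by ring]
  calc A ^ (-b) / 2 + A ^ (-b) * ((A ^ (2 - b) - 1) / (2 - b)) + X / (2 * b - 2)
      = A ^ (-b) / 2 + (X - A ^ (-b)) / (2 - b) + X / (2 * b - 2) := by rw [← hmul]; ring
    _ ≤ X / 2 + X / (2 - b) + X / (2 * b - 2) := by gcongr; linarith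
    _ = (1 / 2 + 1 / (2 - b) + 1 / (2 * b - 2)) * X := by ring

lemma integral_mul_radialMajorant_two {A : ℝ} (hA : 1 ≤ A) :
    ∫ r in Ioi 0, r * radialMajorant 2 A r = A ^ (-2 : ℝ) * (1 + Real.log A) := by
  rw [integral_mul_radialMajorant one_lt_two hA,
    intervalIntegral.integral_congr (g := fun r => r⁻¹) fun r _ => by norm_num [Real.rpow_neg_one],
    integral_inv (zero_notMem_uIcc_one hA), div_one]
  norm_num
  ring

lemma exists_integral_mul_radialMajorant_le_of_two_lt (hb : 2 < b) :
    ∃ C, 0 < C ∧ ∀ A, 1 ≤ A → ∫ r in Ioi 0, r * radialMajorant b A r ≤ C * A ^ (-b) := by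
  have h₁ : 0 < b - 2 := by linarith
  have h₂ : 0 < 2 * b - 2 := by linarith
  refine ⟨1 / 2 + 1 / (b - 2) + 1 / (2 * b - 2), by positivity, fun A hA => ?_⟩
  have hA0 : 0 < A := one_pos.trans_le hA
  set Y := A ^ (-b)
  have hY : 0 ≤ Y := Real.rpow_nonneg hA0.le _
  have hZ : 0 ≤ A ^ (2 - b) := Real.rpow_nonneg hA0.le _
  have hle : A ^ (2 - 2 * b) ≤ Y := Real.rpow_le_rpow_of_exponent_le hA (by linarith)
  have hflip : (A ^ (2 - b) - 1) / (2 - b) = (1 - A ^ (2 - b)) / (b - 2) := by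
    rw [← neg_div_neg_eq, neg_sub, neg_sub]
  rw [integral_mul_radialMajorant (by linarith) hA,
    integral_rpow (Or.inr ⟨by intro h; linarith, zero_notMem_uIcc_one hA⟩), Real.one_rpow,
    show 1 - b + 1 = 2 - b by ring, hflip]
  calc Y / 2 + Y * ((1 - A ^ (2 - b)) / (b - 2)) + A ^ (2 - 2 * b) / (2 * b - 2)
      = Y / 2 + (Y - Y * A ^ (2 - b)) / (b - 2) + A ^ (2 - 2 * b) / (2 * b - 2) := by ring
    _ ≤ Y / 2 + Y / (b - 2) + Y / (2 * b - 2) := by gcongr; nlinarith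
    _ = (1 / 2 + 1 / (b - 2) + 1 / (2 * b - 2)) * Y := by ring

end RadialMajorant

lemma integrable_radialMajorant_norm {b A : ℝ} (hb : 1 < b) (hA : 1 ≤ A) :
    Integrable fun p : ℝ × ℝ => radialMajorant b A ‖p‖ := by
  rw [integrable_fun_norm_addHaar]
  simpa using integrableOn_mul_radialMajorant hb hA

lemma integral_radialMajorant_norm (b A : ℝ) :
    ∫ p : ℝ × ℝ, radialMajorant b A ‖p‖ = 8 * ∫ r in Ioi 0, r * radialMajorant b A r := by
  have hball : (volume : Measure (ℝ × ℝ)).real (Metric.ball 0 1) = 4 := by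
    rw [Measure.real, ← ball_prod_same, Measure.volume_eq_prod, Measure.prod_prod]
    norm_num [Real.volume_ball]
  rw [integral_fun_norm_addHaar]
  simp only [Module.finrank_prod, Module.finrank_self, hball]
  norm_num
  ring

lemma sq_norm_le (p : ℝ × ℝ) : ‖p‖ ^ 2 ≤ p.1 ^ 2 + p.2 ^ 2 := by
  rw [Prod.norm_def, Real.norm_eq_abs, Real.norm_eq_abs]
  rcases max_cases |p.1| |p.2| with ⟨h, -⟩ | ⟨h, -⟩ <;> rw [h, sq_abs] <;> nlinarith

lemma sq_half_le_max (x y a : ℝ) : (a / 2) ^ 2 ≤ max (x ^ 2 + y ^ 2) ((x - a) ^ 2 + y ^ 2) := by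
  nlinarith [le_max_left (x ^ 2 + y ^ 2) ((x - a) ^ 2 + y ^ 2),
    le_max_right (x ^ 2 + y ^ 2) ((x - a) ^ 2 + y ^ 2), sq_nonneg (2 * x - a), sq_nonneg y]

lemma one_div_rpow_mul_rpow_le_radialMajorant {H A P Q r : ℝ} (hH : 0 ≤ H) (hA : 0 < A)
    (hP : 1 ≤ P) (hrP : r ^ 2 ≤ P) (hPQ : P ≤ Q) (hAQ : A ^ 2 ≤ Q) :
    1 / (P ^ (2 * H) * Q ^ (2 * H)) ≤ radialMajorant (4 * H) A r := by
  have hm := max_one_mul_max_pos hA r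
  have hsq : (max 1 r * max A r) ^ 2 ≤ P * Q := by
    rw [mul_pow]
    refine mul_le_mul ?_ ?_ (sq_nonneg _) (zero_le_one.trans hP)
    · rcases max_cases 1 r with ⟨h, -⟩ | ⟨h, -⟩ <;> rw [h] <;> linarith
    · rcases max_cases A r with ⟨h, -⟩ | ⟨h, -⟩ <;> rw [h] <;> linarith
  rw [radialMajorant, Real.rpow_neg hm.le, ← one_div, ← Real.mul_rpow (by linarith) (by linarith),
    show 4 * H = 2 * (2 * H) by ring, Real.rpow_mul hm.le, Real.rpow_two]
  gcongr

/-- Of the two distances `|p|` and `|p - (a,0)|`, the smaller one is at least `1` and the larger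
one at least `a / 2`. -/
lemma integrand_le_radialMajorant_add {H a : ℝ} (hH : 0 ≤ H) (ha : 0 < a) {p : ℝ × ℝ}
    (hp : p ∈ Dtilde a) :
    1 / ((p.1 ^ 2 + p.2 ^ 2) ^ (2 * H) * ((p.1 - a) ^ 2 + p.2 ^ 2) ^ (2 * H)) ≤
      radialMajorant (4 * H) (a / 2) ‖p‖ + radialMajorant (4 * H) (a / 2) ‖p - (a, 0)‖ := by
  obtain ⟨hP, hQ⟩ := hp
  have hA : 0 < a / 2 := by linarith
  have hfar := sq_half_le_max p.1 p.2 a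
  rcases le_total (p.1 ^ 2 + p.2 ^ 2) ((p.1 - a) ^ 2 + p.2 ^ 2) with hPQ | hQP
  · refine le_add_of_le_of_nonneg ?_ (radialMajorant_nonneg _ _ (norm_nonneg _))
    exact one_div_rpow_mul_rpow_le_radialMajorant hH hA hP (sq_norm_le p) hPQ
      (by rwa [max_eq_right hPQ] at hfar)
  · refine le_add_of_nonneg_of_le (radialMajorant_nonneg _ _ (norm_nonneg _)) ?_
    have hnorm : ‖p - (a, 0)‖ ^ 2 ≤ (p.1 - a) ^ 2 + (p.2 - 0) ^ 2 := sq_norm_le (p - (a, 0))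
    rw [sub_zero] at hnorm
    rw [mul_comm]
    exact one_div_rpow_mul_rpow_le_radialMajorant hH hA hQ hnorm hQP
      (by rwa [max_eq_left hQP] at hfar)

lemma measurableSet_Dtilde (a : ℝ) : MeasurableSet (Dtilde a) :=
  (measurableSet_le (f := fun _ => 1) (g := fun p : ℝ × ℝ => p.1 ^ 2 + p.2 ^ 2)
    measurable_const (by fun_prop)).inter
    (measurableSet_le (f := fun _ => 1) (g := fun p : ℝ × ℝ => (p.1 - a) ^ 2 + p.2 ^ 2)
      measurable_const (by fun_prop))

theorem integrableOn_integrand_and_integral_le {H a : ℝ} (hH : 1 / 4 < H) (ha : 2 ≤ a) :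
    IntegrableOn
        (fun p : ℝ × ℝ =>
          1 / ((p.1 ^ 2 + p.2 ^ 2) ^ (2 * H) * ((p.1 - a) ^ 2 + p.2 ^ 2) ^ (2 * H)))
        (Dtilde a) ∧
      ∫ p in Dtilde a, 1 / ((p.1 ^ 2 + p.2 ^ 2) ^ (2 * H) * ((p.1 - a) ^ 2 + p.2 ^ 2) ^ (2 * H))
        ≤ 16 * ∫ r in Ioi 0, r * radialMajorant (4 * H) (a / 2) r := by
  set φ := fun r => radialMajorant (4 * H) (a / 2) r
  have hφ : Integrable fun p : ℝ × ℝ => φ ‖p‖ :=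
    integrable_radialMajorant_norm (by linarith) (by linarith)
  have hg : Integrable fun p : ℝ × ℝ => φ ‖p‖ + φ ‖p - (a, 0)‖ := hφ.add (hφ.comp_sub_right _)
  have hle : ∀ p ∈ Dtilde a,
      1 / ((p.1 ^ 2 + p.2 ^ 2) ^ (2 * H) * ((p.1 - a) ^ 2 + p.2 ^ 2) ^ (2 * H)) ≤
        φ ‖p‖ + φ ‖p - (a, 0)‖ :=
    fun p hp => integrand_le_radialMajorant_add (by linarith) (by linarith) hp
  have hint : IntegrableOn
      (fun p : ℝ × ℝ =>
        1 / ((p.1 ^ 2 + p.2 ^ 2) ^ (2 * H) * ((p.1 - a) ^ 2 + p.2 ^ 2) ^ (2 * H)))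
      (Dtilde a) := by
    refine hg.integrableOn.mono' (Measurable.aestronglyMeasurable (by fun_prop))
      ((ae_restrict_iff' (measurableSet_Dtilde a)).2 (ae_of_all _ fun p hp => ?_))
    rw [Real.norm_of_nonneg (by positivity)]
    exact hle p hp
  refine ⟨hint, ?_⟩
  calc _ ≤ ∫ p in Dtilde a, φ ‖p‖ + φ ‖p - (a, 0)‖ :=
        setIntegral_mono_on hint hg.integrableOn (measurableSet_Dtilde a) hle
    _ ≤ ∫ p, φ ‖p‖ + φ ‖p - (a, 0)‖ :=
        setIntegral_le_integral hg (ae_of_all _ fun p =>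
          add_nonneg (radialMajorant_nonneg _ _ (norm_nonneg _))
            (radialMajorant_nonneg _ _ (norm_nonneg _)))
    _ = 2 * ∫ p, φ ‖p‖ := by
        rw [integral_add hφ (hφ.comp_sub_right _), integral_sub_right_eq_self (fun p => φ ‖p‖)]
        ring
    _ = 16 * ∫ r in Ioi 0, r * radialMajorant (4 * H) (a / 2) r := by
        rw [integral_radialMajorant_norm]
        ring

lemma div_two_rpow_neg {a : ℝ} (ha : 0 ≤ a) (c : ℝ) : (a / 2) ^ (-c) = 2 ^ c / a ^ c := by
  rw [Real.div_rpow ha zero_le_two, Real.rpow_neg ha, Real.rpow_neg zero_le_two, inv_div_inv]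

lemma one_add_log_div_two_le {a : ℝ} (ha : 2 ≤ a) : 1 + Real.log (a / 2) ≤ 2 * Real.log a := by
  rw [Real.log_div (by linarith) two_ne_zero]
  linarith [Real.log_two_gt_d9, Real.log_le_log two_pos ha]

theorem statement_17 (H : ℝ) (hH : 1 / 4 < H) :
    (∀ a : ℝ, 2 ≤ a →
      IntegrableOn
        (fun p : ℝ × ℝ =>
          1 / ((p.1 ^ 2 + p.2 ^ 2) ^ (2 * H) * ((p.1 - a) ^ 2 + p.2 ^ 2) ^ (2 * H)))
        (Dtilde a) volume) ∧
    (H < 1 / 2 → ∃ M : ℝ, 0 < M ∧ ∀ a : ℝ, 2 ≤ a →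
      (∫ p in Dtilde a,
          1 / ((p.1 ^ 2 + p.2 ^ 2) ^ (2 * H) * ((p.1 - a) ^ 2 + p.2 ^ 2) ^ (2 * H)))
        ≤ M / a ^ (8 * H - 2)) ∧
    (H = 1 / 2 → ∃ M : ℝ, 0 < M ∧ ∀ a : ℝ, 2 ≤ a →
      (∫ p in Dtilde a,
          1 / ((p.1 ^ 2 + p.2 ^ 2) ^ (2 * H) * ((p.1 - a) ^ 2 + p.2 ^ 2) ^ (2 * H)))
        ≤ M * Real.log a / a ^ 2) ∧
    (1 / 2 < H → ∃ M : ℝ, 0 < M ∧ ∀ a : ℝ, 2 ≤ a →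
      (∫ p in Dtilde a,
          1 / ((p.1 ^ 2 + p.2 ^ 2) ^ (2 * H) * ((p.1 - a) ^ 2 + p.2 ^ 2) ^ (2 * H)))
        ≤ M / a ^ (4 * H)) := by
  have hb : 1 < 4 * H := by linarith
  have hintegrand := fun a (ha : 2 ≤ a) => integrableOn_integrand_and_integral_le hH ha
  refine ⟨fun a ha => (hintegrand a ha).1, fun hlt => ?_, fun heq => ?_, fun hgt => ?_⟩
  · obtain ⟨C, hC, hJ⟩ := exists_integral_mul_radialMajorant_le_of_lt_two hb (by linarith)
    refine ⟨16 * C * 2 ^ (8 * H - 2), by positivity, fun a ha => (hintegrand a ha).2.trans ?_⟩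
    calc _ ≤ 16 * (C * (a / 2) ^ (-(8 * H - 2))) := by
          rw [show 8 * H - 2 = 2 * (4 * H) - 2 by ring]
          gcongr
          exact hJ (a / 2) (by linarith)
      _ = _ := by rw [div_two_rpow_neg (by linarith)]; ring
  · subst heq
    refine ⟨128, by norm_num, fun a ha => (hintegrand a ha).2.trans ?_⟩
    rw [show 4 * (1 / 2 : ℝ) = 2 by norm_num, integral_mul_radialMajorant_two (by linarith),
      div_two_rpow_neg (by linarith), Real.rpow_two, Real.rpow_two]
    calc _ = 64 * (1 + Real.log (a / 2)) / a ^ 2 := by ring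
      _ ≤ 128 * Real.log a / a ^ 2 := by gcongr ?_ / _; linarith [one_add_log_div_two_le ha]
  · obtain ⟨C, hC, hJ⟩ := exists_integral_mul_radialMajorant_le_of_two_lt (by linarith : 2 < 4 * H)
    refine ⟨16 * C * 2 ^ (4 * H), by positivity, fun a ha => (hintegrand a ha).2.trans ?_⟩
    calc _ ≤ 16 * (C * (a / 2) ^ (-(4 * H))) := by gcongr; exact hJ (a / 2) (by linarith)
      _ = _ := by rw [div_two_rpow_neg (by linarith)]; ring
end
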